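/- arXiv:0808.1713 — 3 statements merged into one kernel-verified Lean document; each statement's English description precedes it below -/
import Mathlib

section
/- For all integers k ≥ 3 and n ≥ 2k-1, there exists a k-uniform hypergraph H on n vertices such that every set of k-1 vertices has at least ⌈n/(2k-2)⌉ - 1 neighbours, but H does not contain a Hamilton cycle (i.e., there is no cyclic ordering of the vertices such that every pair of consecutive vertices lies in a common edge of H consisting of k consecutive vertices). -/
/-!
Take `H` to be all `k`-sets meeting a set `A` of `m = ⌈n/(2k-2)⌉ - 1` vertices. A `(k-1)`-set
meeting `A` has every other vertex as a neighbour, and one avoiding `A` has all of `A`, so the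
degree condition holds. In a Hamilton cycle the window containing `v i` and `v (i+1)` is an
edge, so it contains a vertex of `A`, and `v i` is not its last vertex; hence position `i + (k-1)`
lies fewer than `2k-2` steps after a position carrying a vertex of `A`. So `n ≤ |A|(2k-2) < n`.
-/

open Finset

/-- `v : ℕ → Fin n` is a loose... a Hamilton cycle of the `k`-graph `H` if `v` is `n`-periodic,
its restriction to `Fin n` is a bijection (i.e. a cyclic ordering of the vertices), and every
pair of consecutive vertices lies in an edge of `H` consisting of `k` consecutive vertices. -/
def IsHamiltonCycle (n k : ℕ) (H : Finset (Finset (Fin n))) (v : ℕ → Fin n) : Prop :=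
  (∀ i, v (i + n) = v i) ∧ Function.Bijective (fun i : Fin n => v i) ∧
  ∀ i : ℕ, ∃ a : ℕ, ((Finset.range k).image fun j => v (a + j)) ∈ H ∧
    v i ∈ ((Finset.range k).image fun j => v (a + j)) ∧
    v (i + 1) ∈ ((Finset.range k).image fun j => v (a + j))

theorem Nat.add_sub_one_div_sub_one_mul_lt {n d : ℕ} (hn : 0 < n) (hd : 0 < d) :
    ((n + d - 1) / d - 1) * d < n := by
  have := Nat.div_mul_le_self (n + d - 1) d
  rw [Nat.sub_mul, one_mul]
  omega

section KSetsHitting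

variable {α : Type*} [Fintype α] [DecidableEq α]

def kSetsHitting (k : ℕ) (A : Finset α) : Finset (Finset α) :=
  univ.filter fun e => #e = k ∧ ∃ x ∈ e, x ∈ A

theorem mem_kSetsHitting {k : ℕ} {A e : Finset α} :
    e ∈ kSetsHitting k A ↔ #e = k ∧ ∃ x ∈ e, x ∈ A := by
  simp [kSetsHitting]

theorem card_le_degree_kSetsHitting {k : ℕ} {A T : Finset α} (hk : 1 ≤ k) (hT : #T = k - 1)
    (hA : #A ≤ Fintype.card α - (k - 1)) :
    #A ≤ #(univ.filter fun x => insert x T ∈ kSetsHitting k A) := by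
  have insert_mem {x : α} (hx : x ∉ T) (hit : ∃ y ∈ insert x T, y ∈ A) :
      insert x T ∈ kSetsHitting k A :=
    mem_kSetsHitting.2 ⟨by rw [card_insert_of_notMem hx, hT]; omega, hit⟩
  by_cases hTA : ∃ y ∈ T, y ∈ A
  · obtain ⟨y, hyT, hyA⟩ := hTA
    calc #A ≤ #Tᶜ := by rwa [card_compl, hT]
      _ ≤ _ := card_le_card fun x hx => mem_filter.2
          ⟨mem_univ x, insert_mem (mem_compl.1 hx) ⟨y, mem_insert_of_mem hyT, hyA⟩⟩
  · refine card_le_card fun x hxA => mem_filter.2 ⟨mem_univ x, ?_⟩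
    have hxT : x ∉ T := fun hxT => hTA ⟨x, hxT, hxA⟩
    exact insert_mem hxT ⟨x, mem_insert_self x T, hxA⟩

end KSetsHitting

namespace IsHamiltonCycle

variable {n k : ℕ} {H : Finset (Finset (Fin n))} {v : ℕ → Fin n}

theorem apply_eq_apply_iff (hv : IsHamiltonCycle n k H v) {s t : ℕ} :
    v s = v t ↔ s ≡ t [MOD n] := by
  obtain ⟨hper, hbij, -⟩ := hv
  have hn : 0 < n := Fin.pos (v 0)
  have hper : Function.Periodic v n := hper
  rw [← hper.map_mod_nat s, ← hper.map_mod_nat t]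
  constructor
  · intro h
    exact congrArg Fin.val
      (hbij.1 (a₁ := ⟨s % n, Nat.mod_lt _ hn⟩) (a₂ := ⟨t % n, Nat.mod_lt _ hn⟩) h)
  · intro h
    rw [show s % n = t % n from h]

theorem exists_window (hv : IsHamiltonCycle n k H v) (hkn : k < n) (i : ℕ) :
    ∃ a j, j + 1 < k ∧ a + j ≡ i [MOD n] ∧ ((range k).image fun j => v (a + j)) ∈ H := by
  obtain ⟨a, hH, hi, hi'⟩ := hv.2.2 i
  obtain ⟨j, hj, hvj⟩ := mem_image.1 hi
  obtain ⟨j', hj', hvj'⟩ := mem_image.1 hi'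
  rw [mem_range] at hj hj'
  have hai : a + j ≡ i [MOD n] := hv.apply_eq_apply_iff.1 hvj
  have hjj' : j + 1 ≡ j' [MOD n] := Nat.ModEq.add_left_cancel' a <| by
    rw [← add_assoc]
    exact (hai.add_right 1).trans (hv.apply_eq_apply_iff.1 hvj').symm
  have := hjj'.eq_of_lt_of_lt (by omega) (by omega)
  exact ⟨a, j, by omega, hai, hH⟩

theorem exists_modEq_add_of_forall_exists_mem (hv : IsHamiltonCycle n k H v) (hkn : k < n)
    {A : Finset (Fin n)} (hA : ∀ e ∈ H, ∃ x ∈ e, x ∈ A) (i : ℕ) :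
    ∃ s t, v s ∈ A ∧ t < 2 * k - 2 ∧ i + (k - 1) ≡ s + t [MOD n] := by
  obtain ⟨a, j, hj, hai, hH⟩ := hv.exists_window hkn i
  obtain ⟨x, hx, hxA⟩ := hA _ hH
  obtain ⟨l, hl, rfl⟩ := mem_image.1 hx
  rw [mem_range] at hl
  refine ⟨a + l, j + (k - 1) - l, hxA, by omega, ?_⟩
  calc i + (k - 1) ≡ a + j + (k - 1) [MOD n] := (hai.add_right _).symm
    _ = a + l + (j + (k - 1) - l) := by omega

theorem le_card_mul_of_forall_exists_mem (hv : IsHamiltonCycle n k H v) (hkn : k < n)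
    {A : Finset (Fin n)} (hA : ∀ e ∈ H, ∃ x ∈ e, x ∈ A) : n ≤ #A * (2 * k - 2) := by
  choose s t hs ht hst using hv.exists_modEq_add_of_forall_exists_mem hkn hA
  calc n = #(range n) := (card_range n).symm
    _ ≤ #(A ×ˢ range (2 * k - 2)) := card_le_card_of_injOn (fun i => (v (s i), t i))
        (fun i _ => mem_product.2 ⟨hs i, mem_range.2 (ht i)⟩) ?_
    _ = #A * (2 * k - 2) := by rw [card_product, card_range]
  intro i hi i' hi' h
  obtain ⟨hvs, htt⟩ := Prod.mk.inj h
  have hss := hv.apply_eq_apply_iff.1 hvs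
  have : i + (k - 1) ≡ i' + (k - 1) [MOD n] := by
    refine (hst i).trans ((?_ : s i + t i ≡ s i' + t i' [MOD n]).trans (hst i').symm)
    rw [htt]
    exact hss.add_right _
  exact (Nat.ModEq.add_right_cancel' _ this).eq_of_lt_of_lt (mem_range.1 hi) (mem_range.1 hi')

end IsHamiltonCycle

/-- For all `k ≥ 3` and `n ≥ 2k-1` there is a `k`-uniform hypergraph on `n` vertices in which
every `(k-1)`-set of vertices has at least `⌈n/(2k-2)⌉ - 1` neighbours, but which has no
Hamilton cycle. -/
theorem stmt_0 (k n : ℕ) (hk : 3 ≤ k) (hn : 2 * k - 1 ≤ n) :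
    ∃ H : Finset (Finset (Fin n)),
      (∀ e ∈ H, e.card = k) ∧
      (∀ T : Finset (Fin n), T.card = k - 1 →
        (n + (2 * k - 2) - 1) / (2 * k - 2) - 1 ≤
          (Finset.univ.filter fun x => insert x T ∈ H).card) ∧
      ¬ ∃ v : ℕ → Fin n, IsHamiltonCycle n k H v := by
  set m := (n + (2 * k - 2) - 1) / (2 * k - 2) - 1
  have hmn : m * (2 * k - 2) < n := Nat.add_sub_one_div_sub_one_mul_lt (by omega) (by omega)
  have hm4 : m * 4 ≤ m * (2 * k - 2) := Nat.mul_le_mul_left m (by omega)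
  obtain ⟨A, hA⟩ : ∃ A : Finset (Fin n), #A = m := ⟨Iio ⟨m, by omega⟩, Fin.card_Iio _⟩
  refine ⟨kSetsHitting k A, fun e he => (mem_kSetsHitting.1 he).1, fun T hT => ?_, ?_⟩
  · rw [← hA]
    exact card_le_degree_kSetsHitting (by omega) hT (by rw [hA, Fintype.card_fin]; omega)
  · rintro ⟨v, hv⟩
    have := hv.le_card_mul_of_forall_exists_mem (by omega) fun e he => (mem_kSetsHitting.1 he).2
    rw [hA] at this
    omega
end

section
/- Let k ≥ 2 and let ℓ, a_1, ..., a_k be integers with 0 ≤ a_i < ℓ/2 for all i and ℓ = a_1 + ... + a_k. Then for any s, t ∈ [k] there exists a string of length ℓ over the alphabet {x_1, ..., x_k} such that: (1) no two consecutive characters are equal; (2) the first character is not x_s and the final character is not x_t; (3) the character x_i occurs exactly a_i times, for each i. -/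
/-!
Pad the string with `x_s` in front and `x_t` behind and build it greedily from the left. When the
letter multiplicities `bᵢ` sum to `m`, the previous letter is `p` and the final padding letter is
`q`, the invariant is `2 bᵢ + [i = p] + [i = q] ≤ m + 1` for every `i`. Placing next a letter
`u ≠ p` that maximises `2 b_u + [u = q]` restores the invariant for `m - 1` with `u` in place of
`p`: any other letter breaking it would, together with `u`, occur more than `m` times.
-/

open Finset

section Greedy

variable {α : Type*} [Fintype α] [DecidableEq α] {b : α → ℕ} {p q : α} {n : ℕ}

lemma add_le_sum_of_ne {u i : α} (hui : u ≠ i) : b u + b i ≤ ∑ j, b j := by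
  rw [← sum_pair hui]
  exact sum_le_sum_of_subset (subset_univ _)

lemma exists_ne_pos_of_lt_sum (hp : b p < ∑ i, b i) : ∃ u ≠ p, 0 < b u := by
  by_contra! h
  have : ∑ i, b i = b p := sum_eq_single p (fun i _ hip => by simpa using h i hip) (by simp)
  omega

lemma exists_first_letter (hsum : ∑ i, b i = n + 1)
    (hbound : ∀ i, 2 * b i + (if i = p then 1 else 0) + (if i = q then 1 else 0) ≤ n + 2) :
    ∃ u ≠ p, 0 < b u ∧ ∀ i ≠ u, 2 * b i + (if i = q then 1 else 0) ≤ n + 1 := by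
  set w : α → ℕ := fun i => 2 * b i + if i = q then 1 else 0
  have hp := hbound p
  rw [if_pos rfl] at hp
  obtain ⟨v, hvp, hv⟩ := exists_ne_pos_of_lt_sum (b := b) (p := p) (by omega)
  obtain ⟨u, hu, hmax⟩ := exists_max_image (univ.erase p) w ⟨v, mem_erase.2 ⟨hvp, mem_univ v⟩⟩
  have hup : u ≠ p := ne_of_mem_erase hu
  have hwv := hmax v (mem_erase.2 ⟨hvp, mem_univ v⟩)
  refine ⟨u, hup, by simp only [w] at hwv; split_ifs at hwv <;> omega, fun i hiu => ?_⟩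
  by_cases hip : i = p
  · subst hip
    omega
  · have hwi := hmax i (mem_erase.2 ⟨hip, mem_univ i⟩)
    have hpair := hsum ▸ add_le_sum_of_ne (b := b) (Ne.symm hiu)
    simp only [w] at hwi
    rcases eq_or_ne i q with rfl | hiq
    · simp only [↓reduceIte, if_neg (Ne.symm hiu)] at hwi ⊢
      omega
    · simp only [if_neg hiq] at hwi ⊢
      split_ifs at hwi <;> omega

theorem exists_chain_count_eq (hsum : ∑ i, b i = n)
    (hbound : ∀ i, 2 * b i + (if i = p then 1 else 0) + (if i = q then 1 else 0) ≤ n + 1) :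
    ∃ L : List α, L.length = n ∧ (p :: (L ++ [q])).IsChain (· ≠ ·) ∧ ∀ i, L.count i = b i := by
  induction n generalizing b p with
  | zero =>
    have hb : ∀ i, b i = 0 := fun i => (sum_eq_zero_iff.1 hsum) i (mem_univ i)
    refine ⟨[], rfl, ?_, fun i => (hb i).symm⟩
    have := hbound p
    simp only [List.nil_append, List.isChain_pair, ne_eq]
    rintro rfl
    simp at this
  | succ n ih =>
    obtain ⟨u, hup, hu, hrest⟩ := exists_first_letter hsum hbound
    set b' := Function.update b u (b u - 1)
    have hb'u : b' u + 1 = b u := by simp only [b', Function.update_self]; omega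
    have hb'i : ∀ i ≠ u, b' i = b i := fun i hiu => Function.update_of_ne hiu _ _
    have hsum' : ∑ i, b' i = n := by
      have h₁ : ∑ i, b' i = b u - 1 + ∑ i ∈ univ \ {u}, b i :=
        sum_update_of_mem (mem_univ u) b (b u - 1)
      have h₂ := sum_eq_add_sum_sdiff_singleton_of_mem (mem_univ u) b
      omega
    have hbound' : ∀ i, 2 * b' i + (if i = u then 1 else 0) + (if i = q then 1 else 0) ≤ n + 1 := by
      intro i
      rcases eq_or_ne i u with rfl | hiu
      · have := hbound i
        simp only [↓reduceIte, if_neg hup] at this ⊢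
        omega
      · simpa only [hb'i i hiu, if_neg hiu, add_zero] using hrest i hiu
    obtain ⟨L, hlen, hchain, hcount⟩ := ih hsum' hbound'
    refine ⟨u :: L, by simp [hlen], List.isChain_cons_cons.2 ⟨hup.symm, hchain⟩, fun i => ?_⟩
    rcases eq_or_ne i u with rfl | hiu
    · rw [List.count_cons_self, hcount, hb'u]
    · rw [List.count_cons_of_ne (Ne.symm hiu), hcount, hb'i i hiu]

end Greedy

theorem List.isChain_cons_append_singleton_iff {α : Type*} {R : α → α → Prop} {a b : α}
    {L : List α} (hL : L ≠ []) :
    (a :: (L ++ [b])).IsChain R ↔ R a (L.head hL) ∧ L.IsChain R ∧ R (L.getLast hL) b := by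
  simp [List.isChain_cons, List.isChain_append, List.head?_append, List.head?_eq_some_head hL,
    List.getLast?_eq_some_getLast hL]

/-- If `0 ≤ aᵢ < ℓ/2` for all `i` and `ℓ = a₁ + ⋯ + a_k`, then for any `s, t ∈ [k]` there is a
string of length `ℓ` on the alphabet `x₁, …, x_k` with no two consecutive characters equal,
first character not `x_s`, final character not `x_t`, and exactly `aᵢ` occurrences of `xᵢ`. -/
theorem stmt_1 (k ℓ : ℕ) (a : Fin k → ℕ)
    (ha : ∀ i, 2 * a i < ℓ) (hsum : ∑ i, a i = ℓ) (s t : Fin k) :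
    ∃ f : Fin ℓ → Fin k,
      (∀ i : ℕ, ∀ h : i + 1 < ℓ, f ⟨i, by omega⟩ ≠ f ⟨i + 1, h⟩) ∧
      (∀ h : 0 < ℓ, f ⟨0, h⟩ ≠ s ∧ f ⟨ℓ - 1, by omega⟩ ≠ t) ∧
      (∀ i : Fin k, (Finset.univ.filter fun p => f p = i).card = a i) := by
  obtain ⟨L, hlen, hchain, hcount⟩ :=
    exists_chain_count_eq hsum (p := s) (q := t) fun i => by have := ha i; split_ifs <;> omega
  have hL : L ≠ [] := List.ne_nil_of_length_pos (by have := ha s; omega)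
  obtain ⟨hhead, hchainL, hlast⟩ := (List.isChain_cons_append_singleton_iff hL).1 hchain
  let v : List.Vector (Fin k) ℓ := ⟨L, hlen⟩
  refine ⟨v.get, fun i hi => List.isChain_iff_getElem.1 hchainL i (by omega), fun hℓ => ⟨?_, ?_⟩,
    fun i => (Fin.card_filter_univ_eq_vector_get_eq_count i v).trans (hcount i)⟩
  · rw [List.head_eq_getElem] at hhead
    exact hhead.symm
  · have hlast' : L[ℓ - 1] ≠ t := by simpa only [List.getLast_eq_getElem, hlen] using hlast
    exact hlast'
end

section
/- Let G be the complete k-partite k-uniform hypergraph on vertex classes V_1, ..., V_k (edges are exactly the k-sets meeting each class in one vertex). Let b_1, ..., b_k be integers with 0 ≤ b_i ≤ |V_i|, suppose n := ((b_1 + ... + b_k) - 1)/(k-1) is an integer, and n/2 + 1 ≤ b_i ≤ n for all i. Then for any s, t ∈ [k], G contains a loose path with an initial vertex in V_s, a final vertex in V_t, and exactly b_i vertices in V_i for each i. -/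
/-!
Number the vertices of the path `0, …, n(k-1)`; edge `j` occupies positions `j(k-1), …, j(k-1)+k-1`,
so consecutive edges share the position between them. It suffices to colour positions by classes so
that every edge is rainbow and colour `i` is used `b i` times: distinct vertices of `V i` can then be
placed on the positions of colour `i`. In such a colouring colour `i` occurs once in each edge, so it
is used `n` times minus the number of shared positions of colour `i`; hence the `n - 1` shared
positions must carry colour `i` exactly `n - b i` times. The bound `n/2 + 1 ≤ b i` says that no
colour is needed on more than about half of them, which is exactly what allows a greedy arrangement
of the sequence `s, shared positions, t` without two equal neighbours. Each edge is then completed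
by a permutation of the classes with the two prescribed end colours.
-/

open Finset Function

section HeadSequence

variable {ι : Type*} [Fintype ι] [DecidableEq ι]

/-- If some colour `c ≠ s` attains its bound, it has to come next; at most one colour does. -/
lemma exists_next_of_counts (L : ι → ℕ) (r : ℕ) (s t : ι) (hsum : ∑ i, L i = r + 1)
    (hL : ∀ i, 2 * L i + (if s = i then 1 else 0) + (if t = i then 1 else 0) ≤ r + 2) :
    ∃ c, c ≠ s ∧ 0 < L c ∧ ∀ i ≠ c, 2 * L i + (if t = i then 1 else 0) ≤ r + 1 := by
  by_cases htight : ∃ c ≠ s, 2 * L c + (if t = c then 1 else 0) = r + 2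
  · obtain ⟨c, hcs, hc⟩ := htight
    refine ⟨c, hcs, by grind, fun i hic => ?_⟩
    have hpair := add_le_sum (f := L) (fun _ _ => Nat.zero_le _) (mem_univ i) (mem_univ c) hic
    grind
  · push Not at htight
    obtain ⟨c, hcs, hc⟩ : ∃ c ≠ s, 0 < L c := by
      by_contra! hzero
      rw [sum_eq_single s (fun i _ his => Nat.eq_zero_of_le_zero (hzero i his)) (by simp)] at hsum
      grind
    exact ⟨c, hcs, hc, fun i _ => by grind⟩

/-- The hypothesis is also necessary: the entries equal to `i` among `g 0, …, g (r + 1)` are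
pairwise non-adjacent. -/
theorem exists_seq_of_counts (r : ℕ) (L : ι → ℕ) (s t : ι) (hsum : ∑ i, L i = r)
    (hL : ∀ i, 2 * L i + (if s = i then 1 else 0) + (if t = i then 1 else 0) ≤ r + 1) :
    ∃ g : ℕ → ι, g 0 = s ∧ g (r + 1) = t ∧ (∀ j ≤ r, g j ≠ g (j + 1)) ∧
      ∀ i, #{j ∈ range r | g (j + 1) = i} = L i := by
  induction r generalizing L s with
  | zero =>
    have hst : s ≠ t := by
      rintro rfl
      have := hL s
      simp at this
    refine ⟨fun | 0 => s | _ + 1 => t, rfl, rfl, fun j hj => ?_, fun i => ?_⟩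
    · obtain rfl : j = 0 := by omega
      exact hst
    · simpa using (sum_eq_zero_iff.mp hsum i (mem_univ i)).symm
  | succ r ih =>
    obtain ⟨c, hcs, hc, hne⟩ := exists_next_of_counts L r s t hsum hL
    have hsum' : ∑ i, update L c (L c - 1) i = r := by
      rw [sum_update_of_mem (mem_univ c)]
      rw [sum_eq_add_sum_sdiff_singleton_of_mem (mem_univ c)] at hsum
      omega
    have hL'c : ∀ i, 2 * update L c (L c - 1) i + (if c = i then 1 else 0) +
        (if t = i then 1 else 0) ≤ r + 1 := by
      intro i
      have := hL i
      have := hne i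
      rw [update_apply]
      grind
    obtain ⟨g, hg0, hgr, hgadj, hgcount⟩ := ih _ c hsum' hL'c
    refine ⟨fun | 0 => s | j + 1 => g j, rfl, hgr, fun j hj => ?_, fun i => ?_⟩
    · rcases j with _ | j
      · simpa [hg0] using hcs.symm
      · exact hgadj j (by omega)
    · rw [card_filter, sum_range_succ', ← card_filter]
      change #{j ∈ range r | g (j + 1) = i} + (if g 0 = i then 1 else 0) = L i
      rw [hgcount i, hg0, update_apply]
      grind

end HeadSequence

theorem Equiv.Perm.exists_apply_eq_and_apply_eq {β : Type*} [DecidableEq β] {x y a b : β}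
    (hxy : x ≠ y) (hab : a ≠ b) : ∃ σ : Equiv.Perm β, σ x = a ∧ σ y = b := by
  refine ⟨Equiv.swap x a * Equiv.swap y (Equiv.swap x a b), ?_, by simp⟩
  have hxb : x ≠ Equiv.swap x a b := by
    intro h
    exact hab ((Equiv.swap_apply_eq_iff.mp h.symm).trans (Equiv.swap_apply_left x a)).symm
  simp [Equiv.swap_apply_of_ne_of_ne hxy hxb]

lemma Nat.mul_add_div_of_lt {j d r : ℕ} (hr : r < d) : (j * d + r) / d = j := by
  rw [mul_comm, Nat.mul_add_div (by omega), Nat.div_eq_of_lt hr, add_zero]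

theorem exists_coloring_of_heads {d n : ℕ} (hd : 0 < d) (g : ℕ → Fin (d + 1))
    (hg : ∀ j < n, g j ≠ g (j + 1)) :
    ∃ c : ℕ → Fin (d + 1), (∀ j, c (j * d) = g j) ∧
      ∀ j < n, ∀ i, #{r ∈ range (d + 1) | c (j * d + r) = i} = 1 := by
  have h0last : (0 : Fin (d + 1)) ≠ Fin.last d := by
    rw [Ne, Fin.ext_iff, Fin.val_zero, Fin.val_last]
    omega
  have hσ : ∀ j, ∃ σ : Equiv.Perm (Fin (d + 1)),
      σ 0 = g j ∧ (j < n → σ (Fin.last d) = g (j + 1)) := by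
    intro j
    by_cases hj : j < n
    · obtain ⟨σ, h0, hlast⟩ := Equiv.Perm.exists_apply_eq_and_apply_eq h0last (hg j hj)
      exact ⟨σ, h0, fun _ => hlast⟩
    · exact ⟨Equiv.swap 0 (g j), by simp, fun h => absurd h hj⟩
  choose σ hσ0 hσlast using hσ
  refine ⟨fun x => σ (x / d) ⟨x % d, (Nat.mod_lt x hd).trans d.lt_succ_self⟩, fun j => ?_,
    fun j hj i => ?_⟩
  · simpa [Nat.mul_div_cancel _ hd, Nat.mul_mod_left, Fin.mk_zero] using hσ0 j
  have hblock : ∀ r : Fin (d + 1),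
      σ ((j * d + r) / d) ⟨(j * d + r) % d, (Nat.mod_lt _ hd).trans d.lt_succ_self⟩ = σ j r := by
    intro r
    rcases Nat.lt_or_ge r d with hrd | hrd
    · simp only [Nat.mul_add_div_of_lt hrd, Nat.mul_add_mod_of_lt hrd]
    · obtain rfl : r = Fin.last d := Fin.eq_last_of_not_lt (by omega)
      simp only [Fin.val_last, show j * d + d = (j + 1) * d by ring, Nat.mul_div_cancel _ hd,
        Nat.mul_mod_left, Fin.mk_zero, hσ0, hσlast j hj]
  rw [card_filter, ← Fin.sum_univ_eq_sum_range]
  simp only [hblock]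
  rw [Equiv.sum_comp (σ j) (fun r => if r = i then 1 else 0)]
  simp

theorem card_filter_range_add_card_filter_heads {ι : Type*} [DecidableEq ι] (c : ℕ → ι)
    (d : ℕ) (i : ι) (r : ℕ) (hblock : ∀ j ≤ r, #{x ∈ range (d + 1) | c (j * d + x) = i} = 1) :
    #{x ∈ range ((r + 1) * d + 1) | c x = i} + #{j ∈ range r | c ((j + 1) * d) = i} = r + 1 := by
  induction r with
  | zero => simpa using hblock 0 le_rfl
  | succ r ih =>
    have hprev := ih fun j hj => hblock j (by omega)
    have hnext := hblock (r + 1) le_rfl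
    simp only [card_filter] at hprev hnext ⊢
    rw [sum_range_succ'] at hnext
    rw [show (r + 1 + 1) * d + 1 = ((r + 1) * d + 1) + d by ring, sum_range_add,
      sum_range_succ (fun j => if c ((j + 1) * d) = i then 1 else 0) r]
    simp only [add_assoc, add_comm 1, add_zero] at hnext ⊢
    omega

theorem exists_injOn_of_coloring {ι α : Type*} [DecidableEq ι] [DecidableEq α]
    (V : ι → Finset α) (hV : Pairwise (Disjoint on V)) (c : ℕ → ι) {d n : ℕ}
    (hcard : ∀ i, #{x ∈ range (n * d + 1) | c x = i} ≤ #(V i)) :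
    ∃ p : ℕ → α, Set.InjOn p (Set.Iio (n * d + 1)) ∧
      (∀ j < n, ∀ i, #(((range (d + 1)).image fun r => p (j * d + r)).filter (· ∈ V i)) =
        #{r ∈ range (d + 1) | c (j * d + r) = i}) ∧
      ∀ x < n * d + 1, ∀ i, p x ∈ V i ↔ c x = i := by
  have : Nonempty α := by
    obtain ⟨a, -⟩ := card_pos.mp ((card_pos.mpr ⟨0, by simp⟩).trans_le (hcard (c 0)))
    exact ⟨a⟩
  have hf : ∀ i, ∃ f : ℕ → α, (({x ∈ range (n * d + 1) | c x = i} : Finset ℕ) : Set ℕ) ⊆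
      f ⁻¹' V i ∧ Set.InjOn f ({x ∈ range (n * d + 1) | c x = i} : Finset ℕ) := fun i =>
    (finite_toSet _).exists_injOn_of_encard_le (t := (V i : Set α))
      (by simpa only [Set.encard_coe_eq_coe_finsetCard, Nat.cast_le] using hcard i)
  choose f hfV hfinj using hf
  have hpV : ∀ x < n * d + 1, f (c x) x ∈ V (c x) := fun x hx =>
    hfV (c x) (by simpa [Nat.lt_succ_iff] using hx)
  have hpV_iff : ∀ x < n * d + 1, ∀ i, f (c x) x ∈ V i ↔ c x = i := by
    refine fun x hx i => ⟨fun hxi => ?_, fun h => h ▸ hpV x hx⟩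
    by_contra hne
    exact disjoint_left.mp (hV hne) (hpV x hx) hxi
  have hinj : Set.InjOn (fun x => f (c x) x) (Set.Iio (n * d + 1)) := by
    intro x hx y hy hxy
    simp only at hxy
    have hcxy : c x = c y := (hpV_iff x hx (c y)).mp (hxy ▸ hpV y hy)
    rw [hcxy] at hxy
    exact hfinj (c y) (by simpa [hcxy] using hx) (by simpa using hy) hxy
  refine ⟨fun x => f (c x) x, hinj, fun j hj i => ?_, hpV_iff⟩
  have hpos : ∀ r ∈ range (d + 1), j * d + r < n * d + 1 := fun r hr => by
    have := mem_range.mp hr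
    nlinarith
  rw [filter_image, card_image_of_injOn]
  · exact congrArg card (filter_congr fun r hr => hpV_iff _ (hpos r hr) i)
  · exact fun r hr r' hr' h => by
      simpa using hinj (hpos r (mem_filter.mp hr).1) (hpos r' (mem_filter.mp hr').1) h

theorem exists_coloring_of_bounds {d r : ℕ} (hd : 0 < d) (b : Fin (d + 1) → ℕ)
    (hb : ∑ i, b i = (r + 1) * d + 1) (hlow : ∀ i, r + 1 + 2 ≤ 2 * b i)
    (hup : ∀ i, b i ≤ r + 1) (s t : Fin (d + 1)) :
    ∃ c : ℕ → Fin (d + 1), (∀ j < r + 1, ∀ i, #{x ∈ range (d + 1) | c (j * d + x) = i} = 1) ∧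
      (∀ i, #{x ∈ range ((r + 1) * d + 1) | c x = i} = b i) ∧ c 0 = s ∧ c ((r + 1) * d) = t := by
  have hdeficit : ∑ i, (r + 1 - b i) = r := by
    rw [sum_tsub_distrib _ fun i _ => hup i, hb]
    simp only [sum_const, card_univ, Fintype.card_fin, smul_eq_mul]
    rw [show (d + 1) * (r + 1) = (r + 1) * d + 1 + r by ring]
    omega
  obtain ⟨g, hg0, hgr, hgadj, hgcount⟩ := exists_seq_of_counts r (fun i => r + 1 - b i)
    s t hdeficit fun i => by have := hlow i; have := hup i; split_ifs <;> omega
  obtain ⟨c, hchead, hcblock⟩ :=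
    exists_coloring_of_heads (n := r + 1) hd g fun j hj => hgadj j (by omega)
  refine ⟨c, hcblock, fun i => ?_, by simpa [hg0] using hchead 0, by rw [hchead, hgr]⟩
  have := card_filter_range_add_card_filter_heads c d i r fun j hj => hcblock j (by omega) i
  simp only [hchead, hgcount] at this
  have := hup i
  omega

/-- Loose paths in complete `k`-partite `k`-graphs.  A loose path with `n` edges is given by an
injective sequence `p` of `n(k-1)+1` vertices whose `j`-th edge is the block of `k` consecutive
vertices starting at position `j(k-1)`; membership of each block in the complete `k`-partite
`k`-graph on classes `V₁, …, V_k` is expressed by each block meeting each class exactly once. -/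
theorem stmt_2 {α : Type*} [DecidableEq α] (k : ℕ) (hk : 2 ≤ k)
    (V : Fin k → Finset α) (hdisj : ∀ i j, i ≠ j → Disjoint (V i) (V j))
    (b : Fin k → ℕ) (hbV : ∀ i, b i ≤ (V i).card)
    (n : ℕ) (hn : ∑ i, b i = n * (k - 1) + 1)
    (hlow : ∀ i, n + 2 ≤ 2 * b i) (hup : ∀ i, b i ≤ n) (s t : Fin k) :
    ∃ p : ℕ → α, Set.InjOn p (Set.Iio (n * (k - 1) + 1)) ∧
      (∀ j < n, ∀ i : Fin k,
        (((Finset.range k).image fun r => p (j * (k - 1) + r)).filter (· ∈ V i)).card = 1) ∧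
      (∀ i : Fin k,
        ((Finset.range (n * (k - 1) + 1)).filter fun x => p x ∈ V i).card = b i) ∧
      (∃ j < k - 1, p j ∈ V s) ∧
      (∃ j, n * (k - 1) + 1 - (k - 1) ≤ j ∧ j < n * (k - 1) + 1 ∧ p j ∈ V t) := by
  obtain ⟨d, rfl⟩ : ∃ d, k = d + 1 := ⟨k - 1, by omega⟩
  obtain ⟨r, rfl⟩ : ∃ r, n = r + 1 := by
    refine Nat.exists_eq_succ_of_ne_zero fun hn0 => ?_
    subst hn0
    simp [sum_eq_zero fun i _ => Nat.le_zero.mp (hup i)] at hn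
  simp only [Nat.add_sub_cancel] at hn ⊢
  obtain ⟨c, hcblock, hcount, hc0, hct⟩ := exists_coloring_of_bounds (by omega) b hn hlow hup s t
  obtain ⟨p, hinj, hpblock, hpV⟩ :=
    exists_injOn_of_coloring V hdisj c fun i => (hcount i).trans_le (hbV i)
  refine ⟨p, hinj, fun j hj i => (hpblock j hj i).trans (hcblock j hj i), fun i => ?_,
    ⟨0, by omega, (hpV 0 (by omega) s).2 hc0⟩,
    ⟨(r + 1) * d, by omega, by omega, (hpV _ (by omega) t).2 hct⟩⟩
  rw [← hcount i]
  exact congrArg card (filter_congr fun x hx => hpV x (mem_range.mp hx) i)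
end
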